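/- arXiv:2111.07504 — 3 statements merged into one kernel-verified Lean document; each statement's English description precedes it below -/
import Mathlib

section
/- Let σ be a transitive permutation triple of degree d whose associated Belyi map has genus g = 1 - d + (e(σ₀)+e(σ₁)+e(σ_∞))/2, where e(τ) = d - k(τ) is the excess. If 1/a + 1/b + 1/c = 1 for the orders a, b, c of σ₀, σ₁, σ_∞, then g ≤ 1. -/
/-- The number of cycles of a permutation, counting fixed points as cycles. -/
def numCycles {d : ℕ} (τ : Equiv.Perm (Fin d)) : ℕ :=
  τ.cycleType.card + (Finset.univ.filter fun x => τ x = x).card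

/-- The excess of a permutation. -/
def excess {d : ℕ} (τ : Equiv.Perm (Fin d)) : ℤ := (d : ℤ) - numCycles τ

lemma key_ineq {d : ℕ} (τ : Equiv.Perm (Fin d)) : d ≤ orderOf τ * numCycles τ := by
  have hord : 0 < orderOf τ := orderOf_pos τ
  have hfixset : (Finset.univ.filter fun x => τ x = x) = τ.supportᶜ := by
    ext x; simp [Equiv.Perm.mem_support]
  have hcompl : τ.supportᶜ.card = d - τ.support.card := by
    rw [Finset.card_compl]; simp
  have hsupp : τ.support.card ≤ d := by
    simpa using Finset.card_le_card (Finset.subset_univ τ.support)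
  have hsum : τ.cycleType.sum = τ.support.card := Equiv.Perm.sum_cycleType τ
  have hle : τ.cycleType.sum ≤ Multiset.card τ.cycleType * orderOf τ := by
    calc τ.cycleType.sum ≤ Multiset.card τ.cycleType • orderOf τ := by
          apply Multiset.sum_le_card_nsmul
          intro x hx
          have hdvd := Multiset.dvd_lcm hx
          rw [τ.lcm_cycleType] at hdvd
          exact Nat.le_of_dvd hord hdvd
      _ = Multiset.card τ.cycleType * orderOf τ := by simp [smul_eq_mul]
  have hfixle : τ.supportᶜ.card ≤ orderOf τ * τ.supportᶜ.card :=
    Nat.le_mul_of_pos_left _ hord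
  have hd : d = τ.support.card + τ.supportᶜ.card := by omega
  calc d = τ.support.card + τ.supportᶜ.card := hd
    _ ≤ Multiset.card τ.cycleType * orderOf τ + orderOf τ * τ.supportᶜ.card := by
        omega
    _ = orderOf τ * numCycles τ := by
        rw [numCycles, hfixset]; ring

theorem genus_le_one {d : ℕ} (σ₀ σ₁ σinf : Equiv.Perm (Fin d))
    (hprod : σinf * σ₁ * σ₀ = 1)
    (htrans : ∀ x y : Fin d, ∃ p ∈ Subgroup.closure {σ₀, σ₁, σinf}, p x = y)
    (a b c : ℕ) (ha : a = orderOf σ₀) (hb : b = orderOf σ₁) (hc : c = orderOf σinf)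
    (heuc : (a : ℚ)⁻¹ + (b : ℚ)⁻¹ + (c : ℚ)⁻¹ = 1)
    (g : ℤ)
    (hg : (g : ℚ) = 1 - d + (excess σ₀ + excess σ₁ + excess σinf) / 2) :
    g ≤ 1 := by
  have h0 : (d : ℚ) ≤ a * numCycles σ₀ := by exact_mod_cast ha ▸ key_ineq σ₀
  have h1 : (d : ℚ) ≤ b * numCycles σ₁ := by exact_mod_cast hb ▸ key_ineq σ₁
  have h2 : (d : ℚ) ≤ c * numCycles σinf := by exact_mod_cast hc ▸ key_ineq σinf
  have hap : (0 : ℚ) < a := by exact_mod_cast ha ▸ orderOf_pos σ₀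
  have hbp : (0 : ℚ) < b := by exact_mod_cast hb ▸ orderOf_pos σ₁
  have hcp : (0 : ℚ) < c := by exact_mod_cast hc ▸ orderOf_pos σinf
  have e0 : (d : ℚ) / a ≤ numCycles σ₀ := by
    rw [div_le_iff₀ hap]; nlinarith
  have e1 : (d : ℚ) / b ≤ numCycles σ₁ := by
    rw [div_le_iff₀ hbp]; nlinarith
  have e2 : (d : ℚ) / c ≤ numCycles σinf := by
    rw [div_le_iff₀ hcp]; nlinarith
  have hS : (d : ℚ) ≤ numCycles σ₀ + numCycles σ₁ + numCycles σinf := by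
    have hid : (d : ℚ) = d / a + d / b + d / c := by
      rw [div_eq_mul_inv, div_eq_mul_inv, div_eq_mul_inv]
      linear_combination (-(d : ℚ)) * heuc
    linarith
  have hgle : (g : ℚ) ≤ 1 := by
    rw [hg]
    unfold excess
    push_cast
    linarith [hS]
  exact_mod_cast hgle
end

section
/- Let Λ_Δ = ℤω₁ + ℤω₂ and Λ_Γ = ℤη₁ + ℤη₂ with η₁ = n₁ω₁ + n₂ω₂, η₂ = m₂ω₂, and N = n₁m₂. Then the set {t₁η₁ + t₂η₂ : 0 ≤ t₁ < m₂, 0 ≤ t₂ < n₁} is a complete set of coset representatives for Λ_Γ / NΛ_Δ. -/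
theorem coset_representatives
    (ω₁ ω₂ : ℂ) (hindep : LinearIndependent ℝ ![ω₁, ω₂])
    (n₁ n₂ m₂ : ℤ) (hn₁ : 1 ≤ n₁) (hm₂ : 1 ≤ m₂)
    (η₁ η₂ : ℂ) (hη₁ : η₁ = n₁ • ω₁ + n₂ • ω₂) (hη₂ : η₂ = m₂ • ω₂)
    (ΛΔ ΛΓ : AddSubgroup ℂ)
    (hΛΔ : ΛΔ = AddSubgroup.closure {ω₁, ω₂})
    (hΛΓ : ΛΓ = AddSubgroup.closure {η₁, η₂})
    (N : ℤ) (hNdef : N = n₁ * m₂) :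
    ∀ x ∈ ΛΓ, ∃! t : ℤ × ℤ,
      (0 ≤ t.1 ∧ t.1 < m₂) ∧ (0 ≤ t.2 ∧ t.2 < n₁) ∧
      ∃ w ∈ ΛΔ, x - (t.1 • η₁ + t.2 • η₂) = N • w := by
  subst hη₁ hη₂ hΛΔ hΛΓ hNdef
  intro x hx
  rw [AddSubgroup.mem_closure_pair] at hx
  obtain ⟨a, b, hab⟩ := hx
  have hn₁0 : n₁ ≠ 0 := by omega
  have hm₂0 : m₂ ≠ 0 := by omega
  have key : ∀ p q : ℤ, (p : ℂ) * ω₁ + (q : ℂ) * ω₂ = 0 → p = 0 ∧ q = 0 := by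
    intro p q hpq
    rw [LinearIndependent.pair_iff] at hindep
    have h2 := hindep (p : ℝ) (q : ℝ) ?_
    · exact ⟨by exact_mod_cast h2.1, by exact_mod_cast h2.2⟩
    · rw [Complex.real_smul, Complex.real_smul]
      push_cast
      exact hpq
  have equiv : ∀ t₁ t₂ : ℤ,
      (∃ w ∈ AddSubgroup.closure ({ω₁, ω₂} : Set ℂ),
        x - (t₁ • (n₁ • ω₁ + n₂ • ω₂) + t₂ • (m₂ • ω₂)) = (n₁ * m₂) • w) ↔
      ∃ p q : ℤ, a - t₁ = m₂ * p ∧ p * n₂ + (b - t₂) = n₁ * q := by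
    intro t₁ t₂
    constructor
    · rintro ⟨w, hwmem, hw⟩
      rw [AddSubgroup.mem_closure_pair] at hwmem
      obtain ⟨p, q, hpq⟩ := hwmem
      simp only [zsmul_eq_mul] at hw hab hpq
      push_cast at hw hab hpq
      have e1 : ((a - t₁) * n₁ - n₁ * m₂ * p : ℤ) = 0 ∧
          ((a - t₁) * n₂ + (b - t₂) * m₂ - n₁ * m₂ * q : ℤ) = 0 := by
        have := key ((a - t₁) * n₁ - n₁ * m₂ * p)
          ((a - t₁) * n₂ + (b - t₂) * m₂ - n₁ * m₂ * q) ?_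
        · exact this
        · push_cast
          linear_combination hw + hab - ((n₁ : ℂ) * (m₂ : ℂ)) * hpq
      have h1 : a - t₁ = m₂ * p := by
        have : n₁ * (a - t₁ - m₂ * p) = 0 := by linear_combination e1.1
        rcases mul_eq_zero.mp this with h | h
        · omega
        · omega
      refine ⟨p, q, h1, ?_⟩
      have : m₂ * (p * n₂ + (b - t₂) - n₁ * q) = 0 := by
        linear_combination e1.2 - n₂ * h1
      rcases mul_eq_zero.mp this with h | h
      · omega
      · omega
    · rintro ⟨p, q, h1, h2⟩
      refine ⟨p • ω₁ + q • ω₂, ?_, ?_⟩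
      · exact AddSubgroup.add_mem _
          (AddSubgroup.zsmul_mem _ (AddSubgroup.subset_closure (by simp)) p)
          (AddSubgroup.zsmul_mem _ (AddSubgroup.subset_closure (by simp)) q)
      · simp only [zsmul_eq_mul] at hab ⊢
        rw [← hab]
        push_cast
        have c1 : ((a : ℂ) - t₁) = (m₂ : ℂ) * p := by exact_mod_cast h1
        have c2 : ((p : ℂ)) * n₂ + ((b : ℂ) - t₂) = (n₁ : ℂ) * q := by exact_mod_cast h2
        linear_combination ((n₁ : ℂ) * ω₁ + (n₂ : ℂ) * ω₂) * c1 + ((m₂ : ℂ) * ω₂) * c2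
  refine ⟨(a % m₂, (b + (a / m₂) * n₂) % n₁), ⟨⟨Int.emod_nonneg a hm₂0, Int.emod_lt_of_pos a (by omega)⟩,
    ⟨Int.emod_nonneg _ hn₁0, Int.emod_lt_of_pos _ (by omega)⟩, (equiv _ _).2
      ⟨a / m₂, (b + (a / m₂) * n₂) / n₁, ?_, ?_⟩⟩, ?_⟩
  · have := Int.mul_ediv_add_emod a m₂
    omega
  · have := Int.mul_ediv_add_emod (b + (a / m₂) * n₂) n₁
    omega
  · rintro ⟨t₁, t₂⟩ ⟨⟨hb1, hb2⟩, ⟨hb3, hb4⟩, hw⟩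
    obtain ⟨p, q, h1, h2⟩ := (equiv t₁ t₂).1 hw
    have ht₁ : t₁ = a % m₂ := by
      have ha : a = t₁ + m₂ * p := by omega
      rw [ha, Int.add_mul_emod_self_left, Int.emod_eq_of_lt hb1 hb2]
    have hp : p = a / m₂ := by
      have := Int.mul_ediv_add_emod a m₂
      have h3 : m₂ * p = m₂ * (a / m₂) := by omega
      exact mul_left_cancel₀ hm₂0 h3
    have ht₂ : t₂ = (b + (a / m₂) * n₂) % n₁ := by
      have hb' : b + (a / m₂) * n₂ = t₂ + n₁ * q := by rw [← hp]; omega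
      rw [hb', Int.add_mul_emod_self_left, Int.emod_eq_of_lt hb3 hb4]
    exact Prod.ext ht₁ ht₂
end

section
/- For the rational function φ(x) = (1/128 x⁴ + 1/2 x³ + 9x² - 864)/x³, the numerator N(x) = 1/128 x⁴ + 1/2 x³ + 9x² - 864 factors as (1/128)(x-8)(x+24)³, and N(x) - x³·1 = 1/128 x⁴ - 1/2 x³ + 9x² - 864 factors as (1/128)(x+8)(x-24)³. Hence φ is ramified only above 0, 1, ∞ with ramification indices (3,1), (3,1), (3) respectively. -/
open Polynomial

/-- The numerator of the Belyi map `φ(x) = (1/128 x⁴ + 1/2 x³ + 9x² - 864)/x³`,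
as a polynomial over a field `F` of characteristic zero. -/
noncomputable def belyiNum (F : Type*) [Field F] [CharZero F] : Polynomial F :=
  C (1/128 : F) * X ^ 4 + C (1/2 : F) * X ^ 3 + C (9 : F) * X ^ 2 - C (864 : F)

theorem belyi_map_ramification :
    -- the numerator factors as (1/128)(x-8)(x+24)³
    belyiNum ℚ = C (1/128 : ℚ) * (X - C 8) * (X + C 24) ^ 3 ∧
    -- N(x) - x³ factors as (1/128)(x+8)(x-24)³
    belyiNum ℚ - X ^ 3 = C (1/128 : ℚ) * (X + C 8) * (X - C 24) ^ 3 ∧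
    -- hence φ is unramified away from 0, 1, ∞
    ∀ t : ℂ, t ≠ 0 → t ≠ 1 → Squarefree (belyiNum ℂ - C t * X ^ 3) := by
  refine ⟨?_, ?_, ?_⟩
  · unfold belyiNum
    apply Polynomial.funext
    intro x
    simp
    ring
  · unfold belyiNum
    apply Polynomial.funext
    intro x
    simp
    ring
  · intro t ht0 ht1
    set p : ℂ[X] := belyiNum ℂ - C t * X ^ 3 with hp
    apply Polynomial.Separable.squarefree
    rw [Polynomial.separable_def]
    rw [Polynomial.isCoprime_iff_aeval_ne_zero_of_isAlgClosed (k := ℂ) ℂ p (derivative p)]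
    intro z
    by_contra h
    push_neg at h
    obtain ⟨h1, h2⟩ := h
    simp only [hp, belyiNum, derivative_sub, derivative_add, derivative_mul, derivative_C,
      derivative_X_pow, map_add, map_sub, map_mul, map_pow, aeval_C, aeval_X,
      Algebra.algebraMap_self_apply, zero_mul, zero_add, mul_zero] at h1 h2
    norm_num at h1 h2
    ring_nf at h1 h2
    have h3 : (z - 24) ^ 2 * (z + 24) ^ 2 = 0 := by
      linear_combination (-384 : ℂ) * h1 + (128 * z) * h2
    rcases mul_eq_zero.mp h3 with h4 | h4 <;>
        rw [pow_eq_zero_iff two_ne_zero] at h4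
    · have hz : z = 24 := by linear_combination h4
      subst hz
      exact ht1 (by linear_combination (-1/13824 : ℂ) * h1)
    · have hz : z = -24 := by linear_combination h4
      subst hz
      exact ht0 (by linear_combination (1/13824 : ℂ) * h1)
end
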